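/- Let (X, ‖·‖) be a Banach space and let (xₙ) be a sequence in X such that for all n > l, ‖xₙ − x_l‖ ≤ A_{n,l} + κ sup_{m>k≥ l−1} ‖x_m − x_k‖ with κ ∈ (0,1) and A_{n,l} → 0 as n,l → ∞, and such that the sup on the right-hand side is finite. Then (xₙ) is a Cauchy sequence. -/

import Mathlib

/-!
Let `T k` be the supremum of `‖x n - x l‖` over `k ≤ l < n`. It is antitone and nonnegative, so
it converges to some `b ≥ 0`. Taking the supremum of the hypothesis over `k + 1 ≤ l < n` gives
`T (k + 1) ≤ δ + κ T k` once `k` is so large that `A n l ≤ δ`, hence `b ≤ δ + κ b` for every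
`δ > 0`, and `b = 0` because `κ < 1`. Since `T k` bounds all distances in the `k`-th tail, the
sequence is Cauchy.
-/

open Set Filter Topology

lemma nonpos_of_tendsto_of_eventually_succ_le {T : ℕ → ℝ} {b κ : ℝ} (hκ : κ < 1)
    (hT : Tendsto T atTop (𝓝 b))
    (hstep : ∀ δ > 0, ∀ᶠ k in atTop, T (k + 1) ≤ δ + κ * T k) : b ≤ 0 := by
  have hb : ∀ δ > 0, b ≤ δ + κ * b := fun δ hδ =>
    le_of_tendsto_of_tendsto (hT.comp (tendsto_add_atTop_nat 1))
      ((hT.const_mul κ).const_add δ) (hstep δ hδ)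
  have : (1 - κ) * b ≤ 0 := le_of_forall_pos_le_add fun δ hδ => by linarith [hb δ hδ]
  nlinarith

noncomputable def tailSup (f : ℕ × ℕ → ℝ) (k : ℕ) : ℝ :=
  sSup (f '' {p | k ≤ p.2 ∧ p.2 < p.1})

section TailSup

variable {f : ℕ × ℕ → ℝ} {k : ℕ}

lemma le_tailSup (hf : BddAbove (range f)) {n l : ℕ} (hkl : k ≤ l) (hln : l < n) :
    f (n, l) ≤ tailSup f k :=
  le_csSup (hf.mono (image_subset_range _ _)) ⟨(n, l), ⟨hkl, hln⟩, rfl⟩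

lemma tailSup_le {c : ℝ} (h : ∀ n l, k ≤ l → l < n → f (n, l) ≤ c) : tailSup f k ≤ c :=
  csSup_le ⟨_, (k + 1, k), ⟨le_rfl, k.lt_succ_self⟩, rfl⟩ <| by
    rintro _ ⟨⟨n, l⟩, ⟨hkl, hln⟩, rfl⟩
    exact h n l hkl hln

lemma tailSup_nonneg (hf : BddAbove (range f)) (h0 : ∀ p, 0 ≤ f p) : 0 ≤ tailSup f k :=
  (h0 _).trans (le_tailSup hf le_rfl k.lt_succ_self)

lemma tailSup_antitone (hf : BddAbove (range f)) : Antitone (tailSup f) := fun _ _ hij =>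
  tailSup_le fun _ _ hjl hln => le_tailSup hf (hij.trans hjl) hln

lemma tailSup_succ_le {κ δ : ℝ} {N : ℕ} (hf : BddAbove (range f)) (hκ : 0 ≤ κ)
    (hN : ∀ n l, N ≤ l → l < n → f (n, l) ≤ δ + κ * tailSup f (l - 1)) (hk : N ≤ k) :
    tailSup f (k + 1) ≤ δ + κ * tailSup f k :=
  tailSup_le fun n l hkl hln => calc
    f (n, l) ≤ δ + κ * tailSup f (l - 1) := hN n l (by omega) hln
    _ ≤ δ + κ * tailSup f k := by
      gcongr
      exact tailSup_antitone hf (by omega)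

lemma tendsto_tailSup_zero_of_contraction {A : ℕ → ℕ → ℝ} {κ : ℝ}
    (hf : BddAbove (range f)) (h0 : ∀ p, 0 ≤ f p) (hκ0 : 0 ≤ κ) (hκ1 : κ < 1)
    (hA : ∀ δ > (0 : ℝ), ∃ N, ∀ n l, N ≤ l → l < n → A n l ≤ δ)
    (hrec : ∀ n l, l < n → f (n, l) ≤ A n l + κ * tailSup f (l - 1)) :
    Tendsto (tailSup f) atTop (𝓝 0) := by
  have hbelow : BddBelow (range (tailSup f)) :=
    ⟨0, forall_mem_range.2 fun _ => tailSup_nonneg hf h0⟩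
  have hT := tendsto_atTop_ciInf (tailSup_antitone hf) hbelow
  have hstep : ∀ δ > 0, ∀ᶠ k in atTop, tailSup f (k + 1) ≤ δ + κ * tailSup f k := by
    intro δ hδ
    obtain ⟨N, hN⟩ := hA δ hδ
    filter_upwards [eventually_ge_atTop N] with k hk
    refine tailSup_succ_le hf hκ0 (fun n l hNl hln => ?_) hk
    linarith [hrec n l hln, hN n l hNl hln]
  have hb : ⨅ k, tailSup f k = 0 :=
    le_antisymm (nonpos_of_tendsto_of_eventually_succ_le hκ1 hT hstep)
      (le_ciInf fun _ => tailSup_nonneg hf h0)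
  rwa [hb] at hT

end TailSup

lemma cauchySeq_of_tendsto_tailSup_dist {X : Type*} [PseudoMetricSpace X] {x : ℕ → X}
    (hbdd : BddAbove (range fun p : ℕ × ℕ => dist (x p.1) (x p.2)))
    (h : Tendsto (tailSup fun p => dist (x p.1) (x p.2)) atTop (𝓝 0)) : CauchySeq x := by
  refine cauchySeq_of_le_tendsto_0 _ (fun n m N hn hm => ?_) h
  rcases lt_trichotomy n m with hnm | rfl | hmn
  · rw [dist_comm]
    exact le_tailSup hbdd hn hnm
  · rw [dist_self]
    exact tailSup_nonneg hbdd fun _ => dist_nonneg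
  · exact le_tailSup hbdd hm hmn

theorem cauchy_from_contraction_general
    {X : Type*} [NormedAddCommGroup X]
    (x : ℕ → X) (A : ℕ → ℕ → ℝ) (κ : ℝ) (hκ : κ ∈ Set.Ioo (0:ℝ) 1)
    (hA_to_zero : ∀ δ > (0:ℝ), ∃ N, ∀ n l, N ≤ l → l < n → A n l ≤ δ)
    (hbdd : BddAbove (Set.range fun p : ℕ × ℕ => ‖x p.1 - x p.2‖))
    (hrec : ∀ n l, l < n →
      ‖x n - x l‖ ≤ A n l +
        κ * sSup ((fun p : ℕ × ℕ => ‖x p.1 - x p.2‖) '' {p | l - 1 ≤ p.2 ∧ p.2 < p.1})) :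
    CauchySeq x := by
  simp_rw [← dist_eq_norm] at hbdd hrec
  exact cauchySeq_of_tendsto_tailSup_dist hbdd <|
    tendsto_tailSup_zero_of_contraction hbdd (fun _ => dist_nonneg) hκ.1.le hκ.2 hA_to_zero hrec

/-- Abstract convergence argument (Section 5.3): a contraction estimate up to
vanishing terms `A n l` forces the sequence to be Cauchy. -/
theorem cauchy_from_contraction
    {X : Type*} [NormedAddCommGroup X] [CompleteSpace X]
    (x : ℕ → X) (A : ℕ → ℕ → ℝ) (κ : ℝ) (hκ : κ ∈ Set.Ioo (0:ℝ) 1)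
    (hA_nonneg : ∀ n l, 0 ≤ A n l)
    (hA_to_zero : ∀ δ > (0:ℝ), ∃ N, ∀ n l, N ≤ l → l < n → A n l ≤ δ)
    (hbdd : BddAbove (Set.range fun p : ℕ × ℕ => ‖x p.1 - x p.2‖))
    (hrec : ∀ n l, l < n →
      ‖x n - x l‖ ≤ A n l +
        κ * sSup ((fun p : ℕ × ℕ => ‖x p.1 - x p.2‖) '' {p | l - 1 ≤ p.2 ∧ p.2 < p.1})) :
    CauchySeq x :=
  cauchy_from_contraction_general x A κ hκ hA_to_zero hbdd hrec
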